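/- arXiv:2310.17759 — 2 statements merged into one kernel-verified Lean document; each statement's English description precedes it below -/
import Mathlib

section
/- Let E and E' be real Hilbert spaces, X ⊆ E and Y ⊆ E' nonempty closed convex sets each of diameter at most D, and F : E × E' → ℝ a differentiable function that is convex-concave on X × Y, with saddle operator G(x,y) = (∇_x F(x,y), −∇_y F(x,y)). Assume G is monotone on X × Y and ‖G(z)‖ ≤ L for all z ∈ X × Y. Let T ≥ 1, let ℓ > 0, set α = 1/(ℓ√T), fix z₀ ∈ X × Y, and define the gradient descent ascent iterates z_{t+1} = Π_{X×Y}(z_t − α·G(z_t)) for t = 0, …, T−1. Let (x̄_T, ȳ_T) = (1/T)·Σ_{t=0}^{T−1} z_t. Then F(x̄_T, y) − F(x, ȳ_T) ≤ (ℓD² + L²/(2ℓ))/√T for every (x, y) ∈ X × Y. -/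
open RealInnerProductSpace

noncomputable section

variable {E E' : Type*} [NormedAddCommGroup E] [InnerProductSpace ℝ E] [CompleteSpace E]
  [NormedAddCommGroup E'] [InnerProductSpace ℝ E'] [CompleteSpace E']

/-- The saddle operator `G(x,y) = (∇ₓ F(x,y), −∇_y F(x,y))` on the Hilbert product
`WithLp 2 (E × E')`. -/
def saddleOp (F : E × E' → ℝ) (z : WithLp 2 (E × E')) : WithLp 2 (E × E') :=
  (WithLp.equiv 2 (E × E')).symm
    (gradient (fun u => F (u, (WithLp.equiv 2 (E × E') z).2)) (WithLp.equiv 2 (E × E') z).1,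
     -gradient (fun v => F ((WithLp.equiv 2 (E × E') z).1, v)) (WithLp.equiv 2 (E × E') z).2)

/-- `X × Y` as a subset of the Hilbert product. -/
def prodSet (X : Set E) (Y : Set E') : Set (WithLp 2 (E × E')) :=
  (WithLp.equiv 2 (E × E')) ⁻¹' (X ×ˢ Y)

/-- `p` is the metric projection of `v` onto `S`. -/
def IsProjOn {H : Type*} [NormedAddCommGroup H] (S : Set H) (v p : H) : Prop :=
  p ∈ S ∧ ∀ w ∈ S, ‖v - p‖ ≤ ‖v - w‖

/-! Projection onto the convex set `X × Y` does not increase the distance to any `w ∈ X × Y`, so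
each GDA step gives `‖zₜ₊₁ - w‖² ≤ ‖zₜ - w‖² - 2α⟪G zₜ, zₜ - w⟫ + α²L²`; telescoping and the
diameter bound `‖z₀ - w‖² ≤ 2D²` control `∑ₜ ⟪G zₜ, zₜ - w⟫`. The first-order conditions of
convexity in `x` and concavity in `y` bound the gap `F(xₜ, y) - F(x, yₜ)` by `⟪G zₜ, zₜ - w⟫`, and
Jensen's inequality passes from the average of the gaps to the gap at the averaged iterate. -/

section Gradient

variable {H : Type*} [NormedAddCommGroup H] [InnerProductSpace ℝ H] [CompleteSpace H]
  {s : Set H} {f : H → ℝ} {g a b : H}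

theorem HasGradientAt.hasDerivAt_comp_lineMap (hf : HasGradientAt f g a) (b : H) :
    HasDerivAt (f ∘ AffineMap.lineMap (k := ℝ) a b) ⟪g, b - a⟫ 0 := by
  have hf' : HasFDerivAt f (InnerProductSpace.toDual ℝ H g) (AffineMap.lineMap a b (0 : ℝ)) := by
    simpa using hf.hasFDerivAt
  simpa using hf'.comp_hasDerivAt (0 : ℝ) AffineMap.hasDerivAt_lineMap

theorem ConvexOn.inner_le_sub_of_hasGradientAt (hc : ConvexOn ℝ s f) (hf : HasGradientAt f g a)
    (ha : a ∈ s) (hb : b ∈ s) : ⟪g, b - a⟫ ≤ f b - f a := by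
  simpa [slope] using (hc.comp_affineMap (AffineMap.lineMap a b)).le_slope_of_hasDerivAt
    (x := 0) (y := 1) (by simpa) (by simpa) one_pos (HasGradientAt.hasDerivAt_comp_lineMap hf b)

theorem ConcaveOn.sub_le_inner_of_hasGradientAt (hc : ConcaveOn ℝ s f) (hf : HasGradientAt f g a)
    (ha : a ∈ s) (hb : b ∈ s) : f b - f a ≤ ⟪g, b - a⟫ := by
  simpa [slope] using (hc.comp_affineMap (AffineMap.lineMap a b)).slope_le_of_hasDerivAt
    (x := 0) (y := 1) (by simpa) (by simpa) one_pos (HasGradientAt.hasDerivAt_comp_lineMap hf b)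

end Gradient

section Projection

variable {H : Type*} [NormedAddCommGroup H] [InnerProductSpace ℝ H] {S : Set H} {u v p w g : H}

theorem IsProjOn.inner_sub_nonpos (hS : Convex ℝ S) (hp : IsProjOn S v p) (hw : w ∈ S) :
    ⟪v - p, w - p⟫ ≤ 0 := by
  have : Nonempty S := ⟨⟨p, hp.1⟩⟩
  refine (norm_eq_iInf_iff_real_inner_le_zero hS hp.1).mp ?_ w hw
  exact le_antisymm (le_ciInf fun w => hp.2 w w.2)
    (ciInf_le ⟨0, by rintro _ ⟨w, rfl⟩; positivity⟩ (⟨p, hp.1⟩ : S))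

theorem IsProjOn.norm_sub_sq_le (hS : Convex ℝ S) (hp : IsProjOn S v p) (hw : w ∈ S) :
    ‖p - w‖ ^ 2 ≤ ‖v - w‖ ^ 2 := by
  have hinner : 0 ≤ ⟪v - p, p - w⟫ := by
    rw [← neg_sub w p, inner_neg_right, neg_nonneg]
    exact hp.inner_sub_nonpos hS hw
  calc ‖p - w‖ ^ 2 ≤ ‖v - p‖ ^ 2 + 2 * ⟪v - p, p - w⟫ + ‖p - w‖ ^ 2 := by
        nlinarith [sq_nonneg ‖v - p‖]
    _ = ‖v - w‖ ^ 2 := by rw [← norm_add_sq_real, sub_add_sub_cancel]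

theorem IsProjOn.norm_sub_sq_le_of_step {α : ℝ} (hS : Convex ℝ S)
    (hp : IsProjOn S (u - α • g) p) (hw : w ∈ S) :
    ‖p - w‖ ^ 2 ≤ ‖u - w‖ ^ 2 - 2 * α * ⟪g, u - w⟫ + α ^ 2 * ‖g‖ ^ 2 := by
  calc ‖p - w‖ ^ 2 ≤ ‖(u - w) - α • g‖ ^ 2 := by
        rw [sub_right_comm]; exact hp.norm_sub_sq_le hS hw
    _ = ‖u - w‖ ^ 2 - 2 * α * ⟪g, u - w⟫ + α ^ 2 * ‖g‖ ^ 2 := by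
        rw [norm_sub_sq_real, real_inner_smul_right, real_inner_comm, norm_smul, mul_pow,
          Real.norm_eq_abs, sq_abs]
        ring

theorem IsProjOn.sum_inner_le {z g : ℕ → H} {α L : ℝ} {T : ℕ}
    (hS : Convex ℝ S) (hstep : ∀ t < T, IsProjOn S (z t - α • g t) (z (t + 1)))
    (hg : ∀ t < T, ‖g t‖ ≤ L) (hw : w ∈ S) :
    2 * α * ∑ t ∈ Finset.range T, ⟪g t, z t - w⟫ ≤ ‖z 0 - w‖ ^ 2 + T * (α ^ 2 * L ^ 2) := by
  have hdescent : ∀ t ∈ Finset.range T, 2 * α * ⟪g t, z t - w⟫ ≤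
      (‖z t - w‖ ^ 2 - ‖z (t + 1) - w‖ ^ 2) + α ^ 2 * L ^ 2 := by
    intro t ht
    have ht := Finset.mem_range.mp ht
    have hsq : ‖g t‖ ^ 2 ≤ L ^ 2 := pow_le_pow_left₀ (norm_nonneg _) (hg t ht) 2
    have := (hstep t ht).norm_sub_sq_le_of_step hS hw
    nlinarith [sq_nonneg α]
  calc 2 * α * ∑ t ∈ Finset.range T, ⟪g t, z t - w⟫
      ≤ ∑ t ∈ Finset.range T, ((‖z t - w‖ ^ 2 - ‖z (t + 1) - w‖ ^ 2) + α ^ 2 * L ^ 2) := by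
        rw [Finset.mul_sum]; exact Finset.sum_le_sum hdescent
    _ = ‖z 0 - w‖ ^ 2 - ‖z T - w‖ ^ 2 + T * (α ^ 2 * L ^ 2) := by
        rw [Finset.sum_add_distrib, Finset.sum_range_sub' (fun t => ‖z t - w‖ ^ 2),
          Finset.sum_const, Finset.card_range, nsmul_eq_mul]
    _ ≤ ‖z 0 - w‖ ^ 2 + T * (α ^ 2 * L ^ 2) := by linarith [sq_nonneg ‖z T - w‖]

end Projection

omit [CompleteSpace E] [CompleteSpace E'] in
theorem convex_prodSet {X : Set E} {Y : Set E'} (hX : Convex ℝ X) (hY : Convex ℝ Y) :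
    Convex ℝ (prodSet X Y) :=
  (hX.prod hY).linear_preimage (WithLp.linearEquiv 2 ℝ (E × E')).toLinearMap

omit [InnerProductSpace ℝ E] [CompleteSpace E] [InnerProductSpace ℝ E'] [CompleteSpace E'] in
theorem norm_sub_sq_le_of_mem_prodSet {X : Set E} {Y : Set E'} {D : ℝ}
    (hXD : ∀ s₁ ∈ X, ∀ s₂ ∈ X, ‖s₁ - s₂‖ ≤ D) (hYD : ∀ s₁ ∈ Y, ∀ s₂ ∈ Y, ‖s₁ - s₂‖ ≤ D)
    {z w : WithLp 2 (E × E')} (hz : z ∈ prodSet X Y) (hw : w ∈ prodSet X Y) :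
    ‖z - w‖ ^ 2 ≤ 2 * D ^ 2 := by
  have h₁ : ‖z.fst - w.fst‖ ≤ D := hXD _ hz.1 _ hw.1
  have h₂ : ‖z.snd - w.snd‖ ≤ D := hYD _ hz.2 _ hw.2
  rw [WithLp.prod_norm_sq_eq_of_L2, WithLp.sub_fst, WithLp.sub_snd]
  nlinarith [norm_nonneg (z.fst - w.fst), norm_nonneg (z.snd - w.snd)]

theorem sub_le_inner_saddleOp {X : Set E} {Y : Set E'} {F : E × E' → ℝ}
    {w : WithLp 2 (E × E')} (hF : DifferentiableAt ℝ F (w.fst, w.snd))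
    (hcvx : ConvexOn ℝ X (fun x => F (x, w.snd))) (hccv : ConcaveOn ℝ Y (fun y => F (w.fst, y)))
    (hw : w ∈ prodSet X Y) {x : E} {y : E'} (hx : x ∈ X) (hy : y ∈ Y) :
    F (w.fst, y) - F (x, w.snd) ≤ ⟪saddleOp F w, w - WithLp.toLp 2 (x, y)⟫ := by
  have hFx : DifferentiableAt ℝ (fun u => F (u, w.snd)) w.fst := by
    fun_prop
  have hFy : DifferentiableAt ℝ (fun v => F (w.fst, v)) w.snd := by
    fun_prop
  have h₁ := hcvx.inner_le_sub_of_hasGradientAt hFx.hasGradientAt hw.1 hx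
  have h₂ := hccv.sub_le_inner_of_hasGradientAt hFy.hasGradientAt hw.2 hy
  have hG : ⟪saddleOp F w, w - WithLp.toLp 2 (x, y)⟫ =
      -⟪gradient (fun u => F (u, w.snd)) w.fst, x - w.fst⟫ +
        ⟪gradient (fun v => F (w.fst, v)) w.snd, y - w.snd⟫ := by
    change ⟪gradient (fun u => F (u, w.snd)) w.fst, w.fst - x⟫ +
      ⟪-gradient (fun v => F (w.fst, v)) w.snd, w.snd - y⟫ = _
    rw [inner_neg_left, ← neg_sub x, ← neg_sub y, inner_neg_right, inner_neg_right, neg_neg]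
  linarith

omit [CompleteSpace E] [CompleteSpace E'] in
theorem sub_le_sum_of_convexOn_of_concaveOn {ι : Type*} {s : Finset ι} {μ : ι → ℝ}
    {z : ι → WithLp 2 (E × E')} {X : Set E} {Y : Set E'} {F : E × E' → ℝ} {x : E} {y : E'}
    (hcvx : ConvexOn ℝ X (fun x => F (x, y))) (hccv : ConcaveOn ℝ Y (fun y => F (x, y)))
    (hμ₀ : ∀ i ∈ s, 0 ≤ μ i) (hμ₁ : ∑ i ∈ s, μ i = 1) (hz : ∀ i ∈ s, z i ∈ prodSet X Y) :
    F ((∑ i ∈ s, μ i • z i).fst, y) - F (x, (∑ i ∈ s, μ i • z i).snd) ≤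
      ∑ i ∈ s, μ i * (F ((z i).fst, y) - F (x, (z i).snd)) := by
  have hfst : (∑ i ∈ s, μ i • z i).fst = ∑ i ∈ s, μ i • (z i).fst :=
    map_sum (WithLp.fstₗ 2 ℝ E E') (fun i => μ i • z i) s
  have hsnd : (∑ i ∈ s, μ i • z i).snd = ∑ i ∈ s, μ i • (z i).snd :=
    map_sum (WithLp.sndₗ 2 ℝ E E') (fun i => μ i • z i) s
  have h₁ := hcvx.map_sum_le (p := fun i => (z i).fst) hμ₀ hμ₁ fun i hi => (hz i hi).1
  have h₂ := hccv.le_map_sum (p := fun i => (z i).snd) hμ₀ hμ₁ fun i hi => (hz i hi).2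
  simp only [smul_eq_mul] at h₁ h₂
  rw [hfst, hsnd]
  simp only [mul_sub, Finset.sum_sub_distrib]
  linarith

theorem gda_convergence_general
    (X : Set E) (Y : Set E') (hXcv : Convex ℝ X) (hYcv : Convex ℝ Y)
    (D : ℝ) (hXD : ∀ s₁ ∈ X, ∀ s₂ ∈ X, ‖s₁ - s₂‖ ≤ D) (hYD : ∀ s₁ ∈ Y, ∀ s₂ ∈ Y, ‖s₁ - s₂‖ ≤ D)
    (F : E × E' → ℝ) (hFdiff : Differentiable ℝ F)
    (hcvx : ∀ y ∈ Y, ConvexOn ℝ X (fun x => F (x, y)))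
    (hccv : ∀ x ∈ X, ConcaveOn ℝ Y (fun y => F (x, y)))
    (L : ℝ) (hL : ∀ z ∈ prodSet X Y, ‖saddleOp F z‖ ≤ L)
    (T : ℕ) (hT : 1 ≤ T) (ℓ α : ℝ) (hℓ : 0 < ℓ) (hα : α = 1 / (ℓ * Real.sqrt T))
    (z : ℕ → WithLp 2 (E × E')) (hz0 : z 0 ∈ prodSet X Y)
    (hupd : ∀ t < T, IsProjOn (prodSet X Y) (z t - α • saddleOp F (z t)) (z (t + 1))) :
    ∀ x ∈ X, ∀ y ∈ Y,
      F ((WithLp.equiv 2 (E × E') ((T : ℝ)⁻¹ • ∑ t ∈ Finset.range T, z t)).1, y) -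
        F (x, (WithLp.equiv 2 (E × E') ((T : ℝ)⁻¹ • ∑ t ∈ Finset.range T, z t)).2) ≤
      (ℓ * D ^ 2 + L ^ 2 / (2 * ℓ)) / Real.sqrt T := by
  intro x hx y hy
  set w : WithLp 2 (E × E') := WithLp.toLp 2 (x, y)
  have hw : w ∈ prodSet X Y := ⟨hx, hy⟩
  have hmem : ∀ t < T, z t ∈ prodSet X Y
    | 0, _ => hz0
    | t + 1, ht => (hupd t (by omega)).1
  have hT₀ : (0 : ℝ) < T := by exact_mod_cast hT
  have hα₀ : 0 < α := by rw [hα]; positivity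
  have hregret := IsProjOn.sum_inner_le (convex_prodSet hXcv hYcv) hupd
    (fun t ht => hL _ (hmem t ht)) hw
  have hdiam := norm_sub_sq_le_of_mem_prodSet hXD hYD hz0 hw
  have hgap : ∀ t ∈ Finset.range T,
      F ((z t).fst, y) - F (x, (z t).snd) ≤ ⟪saddleOp F (z t), z t - w⟫ := fun t ht =>
    have hzt := hmem t (Finset.mem_range.mp ht)
    sub_le_inner_saddleOp (hFdiff _) (hcvx _ hzt.2) (hccv _ hzt.1) hzt hx hy
  have havg := sub_le_sum_of_convexOn_of_concaveOn (s := Finset.range T) (μ := fun _ => (T : ℝ)⁻¹)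
    (hcvx y hy) (hccv x hx) (fun _ _ => by positivity) (by simp [hT₀.ne'])
    (fun t ht => hmem t (Finset.mem_range.mp ht))
  rw [← Finset.smul_sum, ← Finset.mul_sum] at havg
  calc _ ≤ (T : ℝ)⁻¹ * ∑ t ∈ Finset.range T, (F ((z t).fst, y) - F (x, (z t).snd)) := havg
    _ ≤ (T : ℝ)⁻¹ * ∑ t ∈ Finset.range T, ⟪saddleOp F (z t), z t - w⟫ := by
        gcongr with t ht; exact hgap t ht
    _ ≤ (T : ℝ)⁻¹ * ((2 * D ^ 2 + T * (α ^ 2 * L ^ 2)) / (2 * α)) := by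
        gcongr; rw [le_div_iff₀ (by positivity)]; linarith
    _ = (ℓ * D ^ 2 + L ^ 2 / (2 * ℓ)) / Real.sqrt T := by
        rw [hα]; field_simp; rw [Real.sq_sqrt hT₀.le]; ring

/-- Lemma B.4: `O(1/√T)` convergence of gradient descent ascent.
With stepsize `α = 1/(ℓ√T)`, the average of the GDA iterates `z_{t+1} = Π_{X×Y}(z_t − α G(z_t))`
satisfies `F(x̄_T, y) − F(x, ȳ_T) ≤ (ℓD² + L²/(2ℓ))/√T` for every `(x,y) ∈ X × Y`. -/
theorem gda_convergence
    (X : Set E) (Y : Set E') (hXne : X.Nonempty) (hYne : Y.Nonempty)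
    (hXcl : IsClosed X) (hYcl : IsClosed Y) (hXcv : Convex ℝ X) (hYcv : Convex ℝ Y)
    (D : ℝ) (hXD : ∀ s₁ ∈ X, ∀ s₂ ∈ X, ‖s₁ - s₂‖ ≤ D) (hYD : ∀ s₁ ∈ Y, ∀ s₂ ∈ Y, ‖s₁ - s₂‖ ≤ D)
    (F : E × E' → ℝ) (hFdiff : Differentiable ℝ F)
    (hcvx : ∀ y ∈ Y, ConvexOn ℝ X (fun x => F (x, y)))
    (hccv : ∀ x ∈ X, ConcaveOn ℝ Y (fun y => F (x, y)))
    (hmono : ∀ z₁ ∈ prodSet X Y, ∀ z₂ ∈ prodSet X Y,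
      0 ≤ ⟪saddleOp F z₁ - saddleOp F z₂, z₁ - z₂⟫)
    (L : ℝ) (hL : ∀ z ∈ prodSet X Y, ‖saddleOp F z‖ ≤ L)
    (T : ℕ) (hT : 1 ≤ T) (ℓ α : ℝ) (hℓ : 0 < ℓ) (hα : α = 1 / (ℓ * Real.sqrt T))
    (z : ℕ → WithLp 2 (E × E')) (hz0 : z 0 ∈ prodSet X Y)
    (hupd : ∀ t < T, IsProjOn (prodSet X Y) (z t - α • saddleOp F (z t)) (z (t + 1))) :
    ∀ x ∈ X, ∀ y ∈ Y,
      F ((WithLp.equiv 2 (E × E') ((T : ℝ)⁻¹ • ∑ t ∈ Finset.range T, z t)).1, y) -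
        F (x, (WithLp.equiv 2 (E × E') ((T : ℝ)⁻¹ • ∑ t ∈ Finset.range T, z t)).2) ≤
      (ℓ * D ^ 2 + L ^ 2 / (2 * ℓ)) / Real.sqrt T :=
  gda_convergence_general X Y hXcv hYcv D hXD hYD F hFdiff hcvx hccv L hL T hT ℓ α hℓ hα z hz0 hupd
end
end

section
/- Let E and E' be real Hilbert spaces, X ⊆ E and Y ⊆ E' nonempty bounded closed convex sets each of diameter at most D, and F : E × E' → ℝ a differentiable function that is convex-concave on X × Y, with saddle operator G(x,y) = (∇_x F(x,y), −∇_y F(x,y)). Assume G is monotone and ℓ-Lipschitz on X × Y and ‖G(z)‖ ≤ L for all z ∈ X × Y. Let T ≥ 1, set α = 1/ℓ, fix z₀, z₀' ∈ X × Y with ‖z₀ − z₀'‖ ≤ δ, and define two Extragradient trajectories via z_{t+1/2} = Π_{X×Y}(z_t − α·G(z_t)), z_{t+1} = Π_{X×Y}(z_t − α·G(z_{t+1/2})) and analogously for the primed sequence, for t = 0, …, T−1. Let z̄_{T+1/2} = (1/T)·Σ_{t=0}^{T−1} z_{t+1/2} and z̄'_{T+1/2} the analogous average. Then ‖z̄_{T+1/2}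 − z̄'_{T+1/2}‖² ≤ 4δ² + (16L²/(3ℓ²))·T². -/
open RealInnerProductSpace

noncomputable section

variable {E E' : Type*} [NormedAddCommGroup E] [InnerProductSpace ℝ E] [CompleteSpace E]
  [NormedAddCommGroup E'] [InnerProductSpace ℝ E'] [CompleteSpace E']

/-!
The projection onto a convex set is nonexpansive, so a projected step `Π(a - α A)` taken from two
points moves them apart by at most `2|α|L` whenever `‖A‖, ‖B‖ ≤ L`. Both updates of Extragradient
are such steps, hence `‖z_t - z'_t‖ ≤ δ + 2|α|L t`, every half iterate satisfies
`‖w_t - w'_t‖ ≤ δ + 2|α|L T`, and so does their average. Finally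
`(δ + b)² ≤ 4δ² + (4/3) b²`, the difference being `(3δ - b)² / 3`.
-/

open Finset

theorem Convex.prodSet {V W : Type*} [AddCommGroup V] [Module ℝ V] [AddCommGroup W] [Module ℝ W]
    {X : Set V} {Y : Set W} (hX : Convex ℝ X) (hY : Convex ℝ Y) : Convex ℝ (prodSet X Y) :=
  (hX.prod hY).linear_preimage (WithLp.linearEquiv 2 ℝ (V × W)).toLinearMap

theorem norm_inv_smul_sum_range_le {V : Type*} [SeminormedAddCommGroup V] [NormedSpace ℝ V]
    {T : ℕ} {v : ℕ → V} {c : ℝ} (hc : 0 ≤ c) (hv : ∀ t < T, ‖v t‖ ≤ c) :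
    ‖(T : ℝ)⁻¹ • ∑ t ∈ range T, v t‖ ≤ c := by
  rw [norm_smul, norm_inv, Real.norm_natCast]
  rcases eq_or_ne T 0 with rfl | hT
  · simpa using hc
  rw [inv_mul_le_iff₀ (by positivity)]
  calc ‖∑ t ∈ range T, v t‖ ≤ ∑ _t ∈ range T, c :=
        norm_sum_le_of_le _ fun t ht => hv t (mem_range.mp ht)
    _ = T * c := by simp

section Projection

variable {H : Type*} [NormedAddCommGroup H] [InnerProductSpace ℝ H] {S : Set H}

theorem IsProjOn.inner_sub_le_zero (hS : Convex ℝ S) {v p : H} (h : IsProjOn S v p) :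
    ∀ w ∈ S, ⟪v - p, w - p⟫ ≤ 0 := by
  have : Nonempty S := ⟨⟨p, h.1⟩⟩
  refine (norm_eq_iInf_iff_real_inner_le_zero hS h.1).mp
    (le_antisymm (le_ciInf fun w => h.2 w w.2) ?_)
  exact ciInf_le ⟨0, by rintro _ ⟨w, rfl⟩; exact norm_nonneg _⟩ (⟨p, h.1⟩ : S)

theorem IsProjOn.norm_sub_le (hS : Convex ℝ S) {v v' p p' : H} (h : IsProjOn S v p)
    (h' : IsProjOn S v' p') : ‖p - p'‖ ≤ ‖v - v'‖ := by
  have h₁ := h.inner_sub_le_zero hS p' h'.1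
  have h₂ := h'.inner_sub_le_zero hS p h.1
  have hsq : ‖p - p'‖ ^ 2 ≤ ⟪v - v', p - p'⟫ := by
    have : ⟪v - v', p - p'⟫ - ‖p - p'‖ ^ 2 = -⟪v - p, p' - p⟫ - ⟪v' - p', p - p'⟫ := by
      rw [← real_inner_self_eq_norm_sq]
      simp only [inner_sub_left, inner_sub_right]
      ring
    linarith
  nlinarith [real_inner_le_norm (v - v') (p - p'), norm_nonneg (p - p'), norm_nonneg (v - v')]

theorem IsProjOn.norm_sub_le_of_step (hS : Convex ℝ S) {a b A B p p' : H} {α L : ℝ}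
    (hp : IsProjOn S (a - α • A) p) (hp' : IsProjOn S (b - α • B) p')
    (hA : ‖A‖ ≤ L) (hB : ‖B‖ ≤ L) : ‖p - p'‖ ≤ ‖a - b‖ + 2 * |α| * L := by
  calc ‖p - p'‖ ≤ ‖(a - α • A) - (b - α • B)‖ := hp.norm_sub_le hS hp'
    _ = ‖(a - b) - α • (A - B)‖ := by rw [smul_sub]; abel_nf
    _ ≤ ‖a - b‖ + |α| * (‖A‖ + ‖B‖) := by
        grw [_root_.norm_sub_le, norm_smul, _root_.norm_sub_le A B, Real.norm_eq_abs]
    _ ≤ ‖a - b‖ + 2 * |α| * L := by nlinarith [abs_nonneg α]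


/-- `w t` is the half iterate `z_{t+1/2}`. -/
def IsExtragradientTrajectory (S : Set H) (G : H → H) (α : ℝ) (T : ℕ) (z w : ℕ → H) : Prop :=
  z 0 ∈ S ∧ ∀ t < T,
    IsProjOn S (z t - α • G (z t)) (w t) ∧ IsProjOn S (z t - α • G (w t)) (z (t + 1))

namespace IsExtragradientTrajectory

variable {G : H → H} {α L : ℝ} {T : ℕ} {z w z' w' : ℕ → H}

theorem mem (h : IsExtragradientTrajectory S G α T z w) : ∀ t ≤ T, z t ∈ S
  | 0, _ => h.1
  | t + 1, ht => ((h.2 t ht).2).1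

theorem norm_sub_le (hS : Convex ℝ S) (hG : ∀ u ∈ S, ‖G u‖ ≤ L)
    (h : IsExtragradientTrajectory S G α T z w) (h' : IsExtragradientTrajectory S G α T z' w') :
    ∀ t ≤ T, ‖z t - z' t‖ ≤ ‖z 0 - z' 0‖ + 2 * |α| * L * t
  | 0, _ => by simp
  | t + 1, ht => by
    have hstep := ((h.2 t ht).2).norm_sub_le_of_step hS ((h'.2 t ht).2)
      (hG _ ((h.2 t ht).1).1) (hG _ ((h'.2 t ht).1).1)
    have ih := norm_sub_le hS hG h h' t (Nat.le_of_succ_le ht)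
    push_cast
    linarith

theorem norm_half_sub_le (hS : Convex ℝ S) (hG : ∀ u ∈ S, ‖G u‖ ≤ L)
    (h : IsExtragradientTrajectory S G α T z w) (h' : IsExtragradientTrajectory S G α T z' w')
    (t : ℕ) (ht : t < T) : ‖w t - w' t‖ ≤ ‖z 0 - z' 0‖ + 2 * |α| * L * T := by
  have hstep := ((h.2 t ht).1).norm_sub_le_of_step hS ((h'.2 t ht).1)
    (hG _ (h.mem t ht.le)) (hG _ (h'.mem t ht.le))
  have hz := h.norm_sub_le hS hG h' t ht.le
  have hL : 0 ≤ |α| * L := mul_nonneg (abs_nonneg α) ((norm_nonneg _).trans (hG _ h.1))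
  have hT : (t : ℝ) + 1 ≤ T := by exact_mod_cast ht
  nlinarith

end IsExtragradientTrajectory

end Projection

theorem extragradient_inexact_initialization_reproducibility_general
    (X : Set E) (Y : Set E') (hXcv : Convex ℝ X) (hYcv : Convex ℝ Y)
    (F : E × E' → ℝ) (ℓ : ℝ)
    (L : ℝ) (hL : ∀ z ∈ prodSet X Y, ‖saddleOp F z‖ ≤ L)
    (T : ℕ) (α : ℝ) (hα : α = 1 / ℓ)
    (δ : ℝ)
    (z w z' w' : ℕ → WithLp 2 (E × E'))
    (hz0 : z 0 ∈ prodSet X Y) (hz0' : z' 0 ∈ prodSet X Y)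
    (hdev : ‖z 0 - z' 0‖ ≤ δ)
    (hhalf : ∀ t < T, IsProjOn (prodSet X Y) (z t - α • saddleOp F (z t)) (w t))
    (hfull : ∀ t < T, IsProjOn (prodSet X Y) (z t - α • saddleOp F (w t)) (z (t + 1)))
    (hhalf' : ∀ t < T, IsProjOn (prodSet X Y) (z' t - α • saddleOp F (z' t)) (w' t))
    (hfull' : ∀ t < T, IsProjOn (prodSet X Y) (z' t - α • saddleOp F (w' t)) (z' (t + 1))) :
    ‖(T : ℝ)⁻¹ • ∑ t ∈ Finset.range T, w t - (T : ℝ)⁻¹ • ∑ t ∈ Finset.range T, w' t‖ ^ 2 ≤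
      4 * δ ^ 2 + 16 * L ^ 2 / (3 * ℓ ^ 2) * T ^ 2 := by
  have hS : Convex ℝ (prodSet X Y) := hXcv.prodSet hYcv
  have htraj : IsExtragradientTrajectory (prodSet X Y) (saddleOp F) α T z w :=
    ⟨hz0, fun t ht => ⟨hhalf t ht, hfull t ht⟩⟩
  have htraj' : IsExtragradientTrajectory (prodSet X Y) (saddleOp F) α T z' w' :=
    ⟨hz0', fun t ht => ⟨hhalf' t ht, hfull' t ht⟩⟩
  have hL0 : 0 ≤ L := (norm_nonneg _).trans (hL _ hz0)
  have hδ0 : 0 ≤ δ := (norm_nonneg _).trans hdev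
  have havg : ‖(T : ℝ)⁻¹ • ∑ t ∈ range T, w t - (T : ℝ)⁻¹ • ∑ t ∈ range T, w' t‖ ≤
      δ + 2 * |α| * L * T := by
    rw [← smul_sub, ← sum_sub_distrib]
    refine norm_inv_smul_sum_range_le (by positivity) fun t ht => ?_
    linarith [htraj.norm_half_sub_le hS hL htraj' t ht]
  have hrhs : 16 * L ^ 2 / (3 * ℓ ^ 2) * T ^ 2 = 4 / 3 * (2 * |α| * L * T) ^ 2 := by
    rw [mul_pow, mul_pow, mul_pow, sq_abs, hα, one_div, inv_pow]
    ring
  rw [hrhs]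
  nlinarith [sq_nonneg (3 * δ - 2 * |α| * L * T), norm_nonneg
    ((T : ℝ)⁻¹ • ∑ t ∈ range T, w t - (T : ℝ)⁻¹ • ∑ t ∈ range T, w' t)]

/-- Theorem 4.3, part (i), reproducibility of Extragradient under a
`δ`-inexact initialization oracle.  Two Extragradient trajectories with stepsize `α = 1/ℓ`
started from `z₀, z₀'` with `‖z₀ − z₀'‖ ≤ δ` satisfy
`‖z̄_{T+1/2} − z̄'_{T+1/2}‖² ≤ 4δ² + (16L²/(3ℓ²))·T²` for the averaged half-iterates. -/
theorem extragradient_inexact_initialization_reproducibility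
    (X : Set E) (Y : Set E') (hXne : X.Nonempty) (hYne : Y.Nonempty)
    (hXbd : Bornology.IsBounded X) (hYbd : Bornology.IsBounded Y)
    (hXcl : IsClosed X) (hYcl : IsClosed Y) (hXcv : Convex ℝ X) (hYcv : Convex ℝ Y)
    (D : ℝ) (hXD : ∀ s₁ ∈ X, ∀ s₂ ∈ X, ‖s₁ - s₂‖ ≤ D) (hYD : ∀ s₁ ∈ Y, ∀ s₂ ∈ Y, ‖s₁ - s₂‖ ≤ D)
    (F : E × E' → ℝ) (hFdiff : Differentiable ℝ F)
    (hcvx : ∀ y ∈ Y, ConvexOn ℝ X (fun x => F (x, y)))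
    (hccv : ∀ x ∈ X, ConcaveOn ℝ Y (fun y => F (x, y)))
    (ℓ : ℝ) (hℓ : 0 < ℓ)
    (hmono : ∀ z₁ ∈ prodSet X Y, ∀ z₂ ∈ prodSet X Y,
      0 ≤ ⟪saddleOp F z₁ - saddleOp F z₂, z₁ - z₂⟫)
    (hlip : ∀ z₁ ∈ prodSet X Y, ∀ z₂ ∈ prodSet X Y,
      ‖saddleOp F z₁ - saddleOp F z₂‖ ≤ ℓ * ‖z₁ - z₂‖)
    (L : ℝ) (hL : ∀ z ∈ prodSet X Y, ‖saddleOp F z‖ ≤ L)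
    (T : ℕ) (hT : 1 ≤ T) (α : ℝ) (hα : α = 1 / ℓ)
    (δ : ℝ)
    (z w z' w' : ℕ → WithLp 2 (E × E'))
    (hz0 : z 0 ∈ prodSet X Y) (hz0' : z' 0 ∈ prodSet X Y)
    (hdev : ‖z 0 - z' 0‖ ≤ δ)
    (hhalf : ∀ t < T, IsProjOn (prodSet X Y) (z t - α • saddleOp F (z t)) (w t))
    (hfull : ∀ t < T, IsProjOn (prodSet X Y) (z t - α • saddleOp F (w t)) (z (t + 1)))
    (hhalf' : ∀ t < T, IsProjOn (prodSet X Y) (z' t - α • saddleOp F (z' t)) (w' t))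
    (hfull' : ∀ t < T, IsProjOn (prodSet X Y) (z' t - α • saddleOp F (w' t)) (z' (t + 1))) :
    ‖(T : ℝ)⁻¹ • ∑ t ∈ Finset.range T, w t - (T : ℝ)⁻¹ • ∑ t ∈ Finset.range T, w' t‖ ^ 2 ≤
      4 * δ ^ 2 + 16 * L ^ 2 / (3 * ℓ ^ 2) * T ^ 2 :=
  extragradient_inexact_initialization_reproducibility_general X Y hXcv hYcv F ℓ L hL T α hα δ z w
    z' w' hz0 hz0' hdev hhalf hfull hhalf' hfull'
end
end
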